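/- Let R be a tangible supertropical semiring (e·𝒯(R) = 𝒢(R)) with 𝒢(R) a cancellative monoid under multiplication, V a free R-module with base (ε_i)_{i∈I}, and q a quadratic form on V. Suppose x, y ∈ V are q-minimal with y < x and e·q(y) = e·q(x); let J := supp(y). Then q(y) ∈ 𝒯(R), q(x) ∈ 𝒢(R), and one of the following holds: (1) |supp(y)| = |supp(x)| = 1 and x = e·y; (2) |supp(y)| = |supp(x)| = 2 and y < x < e·y; (3) |supp(y)| = 1, |supp(x)| ≥ 2, and y = x(J); (4) |supp(y)| = 2, |supp(x)| ≥ 3, and y = x(J). -/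

import Mathlib

/-!
In a supertropical semiring every finite sum equals one of its summands up to a factor `e`, so
the value of `q` on `v = ∑ vᵢ εᵢ` is, up to `e`, a single term `vᵢ² q(εᵢ)` or
`vᵢ vⱼ b(εᵢ, εⱼ)`. If `v` is `q`-minimal and `q v` is tangible, minimality forces
`supp v = {i, j}` and `q v` to be exactly that term; raising one of its coefficients strictly
multiplies the term by at least `e`.

For `y < x` as in the theorem, `q x = e q(y)` with `q y` tangible. Either `y = x(J)`, and then
`J ⊊ supp x`; or some coefficient of `y` grows in `x`, so `q(x(J)) ≥ e q(y) = q x` and minimality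
gives `x = x(J)`. With one base vector, `e y ≤ x` and `q(e y) = q x` give `x = e y`. With two,
`x_i x_j b(εᵢ, εⱼ) = e y_i y_j b(εᵢ, εⱼ)` and cancellation in `𝒢(R)` give `e x = e y`, whence
`x ≤ e y`; and `x = e y` is impossible, since lowering `x_i` back to `y_i` would not lower `q`.
-/

open scoped Classical

namespace Supertrop

section Defs

variable (R : Type*) [CommSemiring R]

/-- The distinguished element `e = 1 + 1` of a semiring. -/
def eps : R := 1 + 1

/-- `R` is a supertropical semiring: `e` is additively idempotent, and the two
supertropical addition axioms hold. -/
def IsSupertropical : Prop :=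
  eps R + eps R = eps R ∧
    (∀ x y : R, eps R * x ≠ eps R * y → x + y = x ∨ x + y = y) ∧
    (∀ x y : R, eps R * x = eps R * y → x + y = eps R * y)

/-- The ghost ideal `eR`, as a subset of `R`. -/
def eSet : Set R := Set.range (fun a : R => eps R * a)

/-- The tangible elements `𝒯(R) = R \ eR`. -/
def tangible : Set R := {x : R | x ∉ eSet R}

/-- The nonzero ghost elements `𝒢(R) = eR \ {0}`. -/
def ghost : Set R := eSet R \ {0}

end Defs

section Orders

variable {R : Type*} [CommSemiring R]

/-- The minimal ordering on an additive monoid: `x ≤ y` iff `∃ z, x + z = y`. -/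
def mle {M : Type*} [AddCommMonoid M] (x y : M) : Prop := ∃ z, x + z = y

/-- Strict minimal ordering. -/
def mlt {M : Type*} [AddCommMonoid M] (x y : M) : Prop := mle x y ∧ x ≠ y

/-- The (total) ordering of the bipotent semiring `eR`: `u ≤ v ⟺ u + v = v`. -/
def gle (u v : R) : Prop := u + v = v

/-- The strict ordering of `eR`. -/
def glt (u v : R) : Prop := gle u v ∧ u ≠ v

end Orders

section SSF

variable (R : Type*) [CommSemiring R]

/-- `R` is a supersemifield: supertropical, every tangible element is invertible in `R`,
and `𝒢(R)` is a group under multiplication with identity `e`. -/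
def IsSupersemifield : Prop :=
  IsSupertropical R ∧
    (∀ t ∈ tangible R, IsUnit t) ∧
    eps R ∈ ghost R ∧
    (∀ g ∈ ghost R, ∀ h ∈ ghost R, g * h ∈ ghost R) ∧
    (∀ g ∈ ghost R, ∃ h ∈ ghost R, g * h = eps R)

/-- The supersemifield `R` is tangible: `e·𝒯(R) = 𝒢(R)`. -/
def TangibleSSF : Prop := (fun t => eps R * t) '' tangible R = ghost R

/-- Nontriviality: `𝒢(R) ≠ {e}`. -/
def NontrivialG : Prop := ghost R ≠ {eps R}

/-- `R` is discrete: `𝒢(R)` has a smallest element `> e`. -/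
def DiscreteR : Prop :=
  ∃ c ∈ ghost R, glt (eps R) c ∧ ∀ d ∈ ghost R, glt (eps R) d → gle c d

/-- `R` is dense: `𝒢(R)` has no smallest element `> e`. -/
def DenseR : Prop := ¬ DiscreteR R

/-- `eR` is a semifield: `e ≠ 0`, `𝒢(R)` is closed under multiplication, and every
element of `𝒢(R)` is invertible in `eR` with respect to the identity `e`. -/
def GhostSemifield : Prop :=
  eps R ∈ ghost R ∧
    (∀ g ∈ ghost R, ∀ h ∈ ghost R, g * h ∈ ghost R) ∧
    (∀ g ∈ ghost R, ∃ h ∈ ghost R, g * h = eps R)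

end SSF

section Quad

variable {R : Type*} [CommSemiring R] {V : Type*} [AddCommMonoid V] [Module R V]

/-- `b` is a (symmetric bilinear) companion of the quadratic form `q`. -/
def IsCompanion (q : V → R) (b : V → V → R) : Prop :=
  (∀ x y, b x y = b y x) ∧
    (∀ x y z, b (x + y) z = b x z + b y z) ∧
    (∀ (a : R) (x y : V), b (a • x) y = a * b x y) ∧
    (∀ x y, q (x + y) = q x + q y + b x y)

/-- `(q, b)` is a quadratic pair on `V`. -/
def IsQuadPair (q : V → R) (b : V → V → R) : Prop :=
  (∀ (a : R) (x : V), q (a • x) = a ^ 2 * q x) ∧ IsCompanion q b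

/-- `q` is a quadratic form on `V`. -/
def IsQuadForm (q : V → R) : Prop := ∃ b, IsQuadPair q b

/-- `q` is quasilinear (i.e. additive) on the submodule `W`. -/
def QuasilinearOn (q : V → R) (W : Submodule R V) : Prop :=
  ∀ u ∈ W, ∀ v ∈ W, q (u + v) = q u + q v

/-- `x` is `q`-minimal: `q x' < q x` for every `x' < x` (in the minimal orderings). -/
def QMinimal (q : V → R) (x : V) : Prop := ∀ x' : V, mlt x' x → mlt (q x') (q x)

/-- The maximum of two elements of `R` with respect to the minimal ordering. -/
noncomputable def rsup (a b : R) : R := if a = b then a else a + b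

/-- The componentwise maximum `x ∨ y` (in the minimal ordering) of two vectors
of a free module. -/
noncomputable def vsup {ι : Type*} (bV : Module.Basis ι R V) (x y : V) : V :=
  bV.repr.symm (Finsupp.zipWith rsup (by simp [rsup]) (bV.repr x) (bV.repr y))

/-- The restriction `x(J)` of a vector to a subset `J` of the index set of the base. -/
noncomputable def restrict {ι : Type*} (bV : Module.Basis ι R V) (x : V) (J : Finset ι) : V :=
  ∑ i ∈ J, (bV.repr x) i • bV i

/-- The CS-ratio `CS(x,y) = e·b(x,y)² · (e·q(x)·q(y))⁻¹`, where `inv` is the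
inversion of the semifield `eR`. -/
noncomputable def CSratio (q : V → R) (b : V → V → R) (inv : R → R) (x y : V) : R :=
  eps R * (b x y) ^ 2 * inv (eps R * (q x * q y))

end Quad

section Semiring

variable {R : Type*} [CommSemiring R]

lemma eps_mul_eq_add_self (a : R) : eps R * a = a + a := by
  rw [eps, add_mul, one_mul]

lemma mle_refl {M : Type*} [AddCommMonoid M] (a : M) : mle a a := ⟨0, add_zero a⟩

lemma mle_trans {M : Type*} [AddCommMonoid M] {a b c : M} (hab : mle a b) (hbc : mle b c) :
    mle a c := by
  obtain ⟨z, rfl⟩ := hab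
  obtain ⟨w, rfl⟩ := hbc
  exact ⟨z + w, (add_assoc _ _ _).symm⟩

lemma mle_add {M : Type*} [AddCommMonoid M] {a b c d : M} (hab : mle a b) (hcd : mle c d) :
    mle (a + c) (b + d) := by
  obtain ⟨z, rfl⟩ := hab
  obtain ⟨w, rfl⟩ := hcd
  exact ⟨z + w, by abel⟩

lemma mle_mul {a b c d : R} (hab : mle a b) (hcd : mle c d) : mle (a * c) (b * d) := by
  obtain ⟨z, rfl⟩ := hab
  obtain ⟨w, rfl⟩ := hcd
  exact ⟨a * w + z * (c + w), by ring⟩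

lemma mle_eps_mul (a : R) : mle a (eps R * a) := ⟨a, (eps_mul_eq_add_self a).symm⟩

lemma eps_mul_eps (hR : IsSupertropical R) : eps R * eps R = eps R := by
  rw [eps_mul_eq_add_self, hR.1]

lemma eps_mul_eps_mul (hR : IsSupertropical R) (a : R) : eps R * (eps R * a) = eps R * a := by
  rw [← mul_assoc, eps_mul_eps hR]

lemma add_eq_right_of_mlt (hR : IsSupertropical R) {a b : R} (hab : mlt a b) : a + b = b := by
  obtain ⟨⟨z, rfl⟩, hne⟩ := hab
  by_cases he : eps R * a = eps R * z
  · have hz : a + z = eps R * a := by rw [hR.2.2 a z he, he]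
    rw [hz, hR.2.2 a _ (eps_mul_eps_mul hR a).symm, eps_mul_eps_mul hR]
  · rcases hR.2.1 a z he with h | h
    · exact absurd h.symm hne
    · rw [h, h]

lemma mle_antisymm (hR : IsSupertropical R) {a b : R} (hab : mle a b) (hba : mle b a) :
    a = b := by
  by_contra hne
  have h₁ := add_eq_right_of_mlt hR ⟨hab, hne⟩
  have h₂ := add_eq_right_of_mlt hR ⟨hba, Ne.symm hne⟩
  rw [add_comm] at h₂
  exact hne (h₂.symm.trans h₁)

lemma eq_zero_of_mle_zero (hR : IsSupertropical R) {a : R} (h : mle a 0) : a = 0 :=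
  mle_antisymm hR h ⟨a, zero_add a⟩

lemma eps_mul_mle_of_mlt (hR : IsSupertropical R) {a b : R} (hab : mlt a b) :
    mle (eps R * a) b := by
  have hb := add_eq_right_of_mlt hR hab
  by_cases he : eps R * a = eps R * b
  · have hb' : b = eps R * a := by rw [he, ← hR.2.2 a b he, hb]
    exact hb' ▸ mle_refl b
  · rcases hR.2.1 (eps R * a) b (by rwa [eps_mul_eps_mul hR]) with h | h
    · -- `b ≤ e·a` together with `a ≤ b` would force `e·a = e·b`
      refine absurd ?_ he
      calc eps R * a = eps R * (eps R * a + b) := by rw [h, eps_mul_eps_mul hR]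
        _ = eps R * (a + b) := by rw [mul_add, mul_add, eps_mul_eps_mul hR]
        _ = eps R * b := by rw [hb]
    · exact ⟨b, h⟩

lemma eps_mul_mul_mle (hR : IsSupertropical R) {a c d f : R} (hac : mle a c) (hdf : mle d f)
    (hne : a ≠ c ∨ d ≠ f) : mle (eps R * (a * d)) (c * f) := by
  rcases hne with hne | hne
  · rw [← mul_assoc]
    exact mle_mul (eps_mul_mle_of_mlt hR ⟨hac, hne⟩) hdf
  · rw [mul_left_comm]
    exact mle_mul hac (eps_mul_mle_of_mlt hR ⟨hdf, hne⟩)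

lemma tangible_ghost_of_mlt_of_eps_mul_eq (hR : IsSupertropical R) {a b : R} (hab : mlt a b)
    (he : eps R * a = eps R * b) : a ∈ tangible R ∧ b ∈ ghost R ∧ b = eps R * a := by
  have hb : b = eps R * a := by
    rw [he, ← hR.2.2 a b he, add_eq_right_of_mlt hR hab]
  refine ⟨fun ⟨c, hc⟩ => hab.2 ?_, ⟨⟨a, hb.symm⟩, fun h0 => hab.2 ?_⟩, hb⟩
  · rw [hb, ← hc, eps_mul_eps_mul hR]
  · obtain rfl : b = 0 := h0
    exact eq_zero_of_mle_zero hR hab.1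

lemma eq_of_mul_eq_mul_of_mle (hR : IsSupertropical R)
    (hcanc : ∀ g ∈ ghost R, ∀ a ∈ ghost R, ∀ c ∈ ghost R, g * a = g * c → a = c)
    {u u' v v' : R} (hu : u ∈ eSet R) (hu' : u' ∈ eSet R) (hv : v ∈ eSet R)
    (huu' : mle u u') (hvv' : mle v v') (h : u * v = u' * v') (h0 : u * v ≠ 0) : u = u' := by
  have huv : u * v = u' * v :=
    mle_antisymm hR (mle_mul huu' (mle_refl v)) (h ▸ mle_mul (mle_refl u') hvv')
  refine hcanc v ⟨hv, fun hv0 => h0 ?_⟩ u ⟨hu, fun hu0 => h0 ?_⟩ u' ⟨hu', fun hu0 => h0 ?_⟩ ?_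
  · rw [show v = 0 from hv0, mul_zero]
  · rw [show u = 0 from hu0, zero_mul]
  · rw [huv, show u' = 0 from hu0, zero_mul]
  · rw [mul_comm v, mul_comm v, huv]

lemma eps_mul_eq_of_mul_mul_eq (hR : IsSupertropical R)
    (hcanc : ∀ g ∈ ghost R, ∀ a ∈ ghost R, ∀ c ∈ ghost R, g * a = g * c → a = c)
    {a c d f B : R} (hac : mle a c) (hdf : mle d f) (h : c * f * B = eps R * (a * d * B))
    (h0 : c * f * B ≠ 0) : eps R * a = eps R * c := by
  have hl : eps R * a * (eps R * (d * B)) = c * f * B :=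
    calc _ = eps R * eps R * (a * d * B) := by ring
      _ = c * f * B := by rw [eps_mul_eps hR, h]
  have hr : eps R * c * (eps R * (f * B)) = c * f * B :=
    calc _ = eps R * eps R * (c * f * B) := by ring
      _ = c * f * B := by rw [eps_mul_eps hR, h, eps_mul_eps_mul hR]
  exact eq_of_mul_eq_mul_of_mle hR hcanc ⟨a, rfl⟩ ⟨c, rfl⟩ ⟨d * B, rfl⟩
    (mle_mul (mle_refl _) hac) (mle_mul (mle_refl _) (mle_mul hdf (mle_refl B)))
    (hl.trans hr.symm) (hl ▸ h0)

end Semiring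

section EqUpToEps

variable {R : Type*} [CommSemiring R]

def EqUpToEps (t a : R) : Prop := t = a ∨ t = eps R * a

lemma EqUpToEps.refl (a : R) : EqUpToEps a a := Or.inl rfl

lemma EqUpToEps.trans (hR : IsSupertropical R) {t a b : R} (hta : EqUpToEps t a)
    (hab : EqUpToEps a b) : EqUpToEps t b := by
  rcases hta with rfl | rfl <;> rcases hab with rfl | rfl
  · exact .inl rfl
  · exact .inr rfl
  · exact .inr rfl
  · exact .inr (eps_mul_eps_mul hR b)

lemma EqUpToEps.eq_of_notMem_eSet {t a : R} (h : EqUpToEps t a) (ht : t ∉ eSet R) : t = a :=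
  h.resolve_right fun h' => ht ⟨a, h'.symm⟩

lemma eqUpToEps_add (hR : IsSupertropical R) (a b : R) :
    EqUpToEps (a + b) a ∨ EqUpToEps (a + b) b := by
  by_cases he : eps R * a = eps R * b
  · exact .inr (.inr (hR.2.2 a b he))
  · exact (hR.2.1 a b he).imp .inl .inl

lemma exists_eqUpToEps_sum (hR : IsSupertropical R) {α : Type*} {s : Finset α}
    (hs : s.Nonempty) (f : α → R) : ∃ i ∈ s, EqUpToEps (∑ k ∈ s, f k) (f i) := by
  induction hs using Finset.Nonempty.cons_induction with
  | singleton a => exact ⟨a, Finset.mem_singleton_self a, by simpa using EqUpToEps.refl (f a)⟩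
  | cons a s ha _ ih =>
    obtain ⟨i, hi, hsum⟩ := ih
    rw [Finset.sum_cons]
    rcases eqUpToEps_add hR (f a) (∑ k ∈ s, f k) with h | h
    · exact ⟨a, Finset.mem_cons_self a s, h⟩
    · exact ⟨i, Finset.mem_cons_of_mem hi, h.trans hR hsum⟩

end EqUpToEps

lemma QMinimal.eq_of_mle {R : Type*} [CommSemiring R] {V : Type*} [AddCommMonoid V]
    {q : V → R} (hR : IsSupertropical R) {x x' : V} (hx : QMinimal q x)
    (hx' : mle x' x) (hq : mle (q x) (q x')) : x' = x := by
  by_contra hne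
  have hlt := hx x' ⟨hx', hne⟩
  exact hlt.2 (mle_antisymm hR hlt.1 hq)

section Quadratic

variable {R : Type*} [CommSemiring R] {V : Type*} [AddCommMonoid V] [Module R V]
variable {q : V → R} {bb : V → V → R}

lemma IsQuadPair.map_zero (hqb : IsQuadPair q bb) : q 0 = 0 := by
  simpa using hqb.1 0 0

lemma IsQuadPair.companion_add_right (hqb : IsQuadPair q bb) (x u v : V) :
    bb x (u + v) = bb x u + bb x v := by
  rw [hqb.2.1, hqb.2.2.1, hqb.2.1 u, hqb.2.1 v]

lemma IsQuadPair.companion_smul_right (hqb : IsQuadPair q bb) (a : R) (x v : V) :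
    bb x (a • v) = a * bb x v := by
  rw [hqb.2.1, hqb.2.2.2.1, hqb.2.1 v]

lemma IsQuadPair.companion_zero_right (hqb : IsQuadPair q bb) (x : V) : bb x 0 = 0 := by
  simpa using hqb.companion_smul_right 0 x 0

lemma IsQuadPair.companion_sum_right (hqb : IsQuadPair q bb) (x : V) {α : Type*}
    (s : Finset α) (w : α → V) : bb x (∑ k ∈ s, w k) = ∑ k ∈ s, bb x (w k) :=
  map_sum (AddMonoidHom.mk ⟨bb x, hqb.companion_zero_right x⟩ (hqb.companion_add_right x)) w s

lemma IsQuadPair.companion_mle (hqb : IsQuadPair q bb) (u v : V) : mle (bb u v) (q (u + v)) :=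
  ⟨q u + q v, by rw [hqb.2.2.2.2]; ring⟩

/-- A term of the expansion `q (∑ k, w k) = ∑ k, q (w k) + ∑_{k < l} b (w k) (w l)`. -/
noncomputable def quadTerm (q : V → R) (bb : V → V → R) {ι : Type*} (w : ι → V) (i j : ι) : R :=
  if i = j then q (w i) else bb (w i) (w j)

lemma quadTerm_mle_q_sum_pair (hqb : IsQuadPair q bb) {ι : Type*} (w : ι → V) (i j : ι) :
    mle (quadTerm q bb w i j) (q (∑ k ∈ {i, j}, w k)) := by
  unfold quadTerm
  split_ifs with hij
  · subst hij
    simpa using mle_refl (q (w i))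
  · rw [Finset.sum_pair hij]
    exact hqb.companion_mle _ _

/-- Since sums in `R` collapse to one summand up to `e`, so does the expansion of `q` on a
finite sum. -/
lemma exists_eqUpToEps_quadTerm (hR : IsSupertropical R) (hqb : IsQuadPair q bb)
    {ι : Type*} {s : Finset ι} (hs : s.Nonempty) (w : ι → V) :
    ∃ i ∈ s, ∃ j ∈ s, EqUpToEps (q (∑ k ∈ s, w k)) (quadTerm q bb w i j) := by
  induction hs using Finset.Nonempty.cons_induction with
  | singleton a =>
    exact ⟨a, Finset.mem_singleton_self a, a, Finset.mem_singleton_self a,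
      by simpa [quadTerm] using EqUpToEps.refl (q (w a))⟩
  | cons a s ha hs ih =>
    obtain ⟨i, hi, j, hj, hsum⟩ := ih
    have hexp : q (∑ k ∈ Finset.cons a s ha, w k) =
        q (w a) + (q (∑ k ∈ s, w k) + ∑ k ∈ s, bb (w a) (w k)) := by
      rw [Finset.sum_cons, hqb.2.2.2.2, hqb.companion_sum_right, add_assoc]
    rw [hexp]
    rcases eqUpToEps_add hR (q (w a)) _ with h | h
    · exact ⟨a, Finset.mem_cons_self a s, a, Finset.mem_cons_self a s, by simpa [quadTerm] using h⟩
    rcases eqUpToEps_add hR (q (∑ k ∈ s, w k)) _ with h' | h'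
    · exact ⟨i, Finset.mem_cons_of_mem hi, j, Finset.mem_cons_of_mem hj,
        (h.trans hR h').trans hR hsum⟩
    obtain ⟨k, hk, hcross⟩ := exists_eqUpToEps_sum hR hs fun k => bb (w a) (w k)
    have hak : a ≠ k := fun hak => ha (hak ▸ hk)
    exact ⟨a, Finset.mem_cons_self a s, k, Finset.mem_cons_of_mem hk,
      by simpa [quadTerm, hak] using (h.trans hR h').trans hR hcross⟩

lemma mle_smul_right {a c : R} (hac : mle a c) (v : V) : mle (a • v) (c • v) := by
  obtain ⟨z, rfl⟩ := hac
  exact ⟨z • v, (add_smul a z v).symm⟩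

lemma mle_eps_smul (v : V) : mle v (eps R • v) := ⟨v, by rw [eps, add_smul, one_smul]⟩

end Quadratic

section Basis

variable {R : Type*} [CommSemiring R] {V : Type*} [AddCommMonoid V] [Module R V]
variable {ι : Type*} (bV : Module.Basis ι R V) {q : V → R} {bb : V → V → R}

noncomputable def coordTerm (v : V) (k : ι) : V := bV.repr v k • bV k

lemma restrict_eq_sum_coordTerm (v : V) (J : Finset ι) :
    restrict bV v J = ∑ k ∈ J, coordTerm bV v k := rfl

lemma restrict_singleton (v : V) (i : ι) : restrict bV v {i} = coordTerm bV v i :=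
  Finset.sum_singleton _ _

lemma restrict_pair (v : V) {i j : ι} (hij : i ≠ j) :
    restrict bV v {i, j} = coordTerm bV v i + coordTerm bV v j :=
  Finset.sum_pair hij

lemma restrict_support (v : V) : restrict bV v (bV.repr v).support = v := by
  conv_rhs => rw [← bV.linearCombination_repr v]
  rw [Finsupp.linearCombination_apply, Finsupp.sum, restrict]

lemma repr_restrict (v : V) (J : Finset ι) (k : ι) :
    bV.repr (restrict bV v J) k = if k ∈ J then bV.repr v k else 0 := by
  simp [restrict, Finsupp.single_apply]

lemma support_restrict_subset (v : V) (J : Finset ι) :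
    (bV.repr (restrict bV v J)).support ⊆ J := by
  intro k hk
  by_contra hkJ
  rw [Finsupp.mem_support_iff, repr_restrict, if_neg hkJ] at hk
  exact hk rfl

lemma restrict_mle_self {v : V} {J : Finset ι} (hJ : J ⊆ (bV.repr v).support) :
    mle (restrict bV v J) v :=
  ⟨restrict bV v ((bV.repr v).support \ J), by
    rw [restrict, restrict, add_comm, Finset.sum_sdiff hJ, ← restrict, restrict_support]⟩

lemma exists_mem_repr_ne_of_restrict_ne {y x : V} {J : Finset ι}
    (h : restrict bV y J ≠ restrict bV x J) : ∃ k ∈ J, bV.repr y k ≠ bV.repr x k := by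
  contrapose! h
  exact Finset.sum_congr rfl fun k hk => by rw [h k hk]

lemma mle_repr {y x : V} (h : mle y x) (k : ι) : mle (bV.repr y k) (bV.repr x k) := by
  obtain ⟨z, rfl⟩ := h
  exact ⟨bV.repr z k, by rw [map_add, Finsupp.add_apply]⟩

lemma support_subset_of_mle (hR : IsSupertropical R) {y x : V} (h : mle y x) :
    (bV.repr y).support ⊆ (bV.repr x).support := by
  intro k hk
  rw [Finsupp.mem_support_iff] at hk ⊢
  exact fun hx0 => hk (eq_zero_of_mle_zero hR (hx0 ▸ mle_repr bV h k))

lemma quadTerm_coordTerm (hqb : IsQuadPair q bb) (v : V) (i j : ι) :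
    quadTerm q bb (coordTerm bV v) i j = bV.repr v i * bV.repr v j * quadTerm q bb bV i j := by
  unfold quadTerm coordTerm
  split_ifs with hij
  · subst hij
    rw [hqb.1, pow_two]
  · rw [hqb.2.2.2.1, hqb.companion_smul_right, mul_assoc]

lemma eps_mul_quadTerm_mle (hR : IsSupertropical R) (hqb : IsQuadPair q bb) {y x : V}
    (hyx : mle y x) {i j k : ι} (hk : k ∈ ({i, j} : Finset ι)) (hne : bV.repr y k ≠ bV.repr x k) :
    mle (eps R * quadTerm q bb (coordTerm bV y) i j) (quadTerm q bb (coordTerm bV x) i j) := by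
  rw [quadTerm_coordTerm bV hqb, quadTerm_coordTerm bV hqb, ← mul_assoc]
  refine mle_mul (eps_mul_mul_mle hR (mle_repr bV hyx i) (mle_repr bV hyx j) ?_) (mle_refl _)
  rcases Finset.mem_insert.1 hk with rfl | hk
  · exact .inl hne
  · exact .inr (Finset.mem_singleton.1 hk ▸ hne)

lemma QMinimal.exists_support_eq_pair (hR : IsSupertropical R) (hqb : IsQuadPair q bb)
    {v : V} (hmin : QMinimal q v) (ht : q v ∉ eSet R) :
    ∃ i j, (bV.repr v).support = {i, j} ∧ q v = quadTerm q bb (coordTerm bV v) i j := by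
  have hne : (bV.repr v).support.Nonempty := by
    rw [Finset.nonempty_iff_ne_empty]
    intro h0
    rw [← restrict_support bV v, h0, restrict, Finset.sum_empty, hqb.map_zero] at ht
    exact ht ⟨0, mul_zero _⟩
  obtain ⟨i, hi, j, hj, hterm⟩ := exists_eqUpToEps_quadTerm hR hqb hne (coordTerm bV v)
  rw [← restrict_eq_sum_coordTerm, restrict_support] at hterm
  have hqv := hterm.eq_of_notMem_eSet ht
  have hij : {i, j} ⊆ (bV.repr v).support := Finset.insert_subset hi (by simpa using hj)
  have hres : restrict bV v {i, j} = v := by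
    refine hmin.eq_of_mle hR (restrict_mle_self bV hij) ?_
    rw [hqv, restrict_eq_sum_coordTerm]
    exact quadTerm_mle_q_sum_pair hqb _ i j
  refine ⟨i, j, Finset.Subset.antisymm ?_ hij, hqv⟩
  rw [← hres]
  exact support_restrict_subset bV v _

end Basis

section MinimalPairs

variable {R : Type*} [CommSemiring R] {V : Type*} [AddCommMonoid V] [Module R V]
variable {ι : Type*} (bV : Module.Basis ι R V) {q : V → R} {bb : V → V → R}

lemma card_support_lt_of_eq_restrict {x y : V} (hlt : mlt y x)
    (hJx : (bV.repr y).support ⊆ (bV.repr x).support)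
    (hy : y = restrict bV x (bV.repr y).support) :
    (bV.repr y).support.card < (bV.repr x).support.card := by
  refine Finset.card_lt_card (Finset.ssubset_iff_subset_ne.2 ⟨hJx, fun h => hlt.2 ?_⟩)
  rw [hy, h, restrict_support]

lemma support_eq_of_ne_restrict (hR : IsSupertropical R) (hqb : IsQuadPair q bb) {x y : V}
    (hxmin : QMinimal q x) (hyx : mle y x) (hqx : q x = eps R * q y) {i j : ι}
    (hJ : (bV.repr y).support = {i, j}) (hqy : q y = quadTerm q bb (coordTerm bV y) i j)
    (hne : y ≠ restrict bV x (bV.repr y).support) :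
    (bV.repr x).support = (bV.repr y).support := by
  have hJx := support_subset_of_mle bV hR hyx
  conv at hne => lhs; rw [← restrict_support bV y]
  obtain ⟨k, hk, hyk⟩ := exists_mem_repr_ne_of_restrict_ne bV hne
  rw [hJ] at hk hJx
  have hdom : mle (q x) (q (restrict bV x {i, j})) := by
    rw [hqx, hqy, restrict_eq_sum_coordTerm]
    exact mle_trans (eps_mul_quadTerm_mle bV hR hqb hyx hk hyk)
      (quadTerm_mle_q_sum_pair hqb _ i j)
  have hres := hxmin.eq_of_mle hR (restrict_mle_self bV hJx) hdom
  rw [hJ]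
  refine Finset.Subset.antisymm ?_ hJx
  rw [← hres]
  exact support_restrict_subset bV x _

lemma eq_eps_smul_of_support_singleton (hR : IsSupertropical R) (hqb : IsQuadPair q bb)
    {x y : V} (hxmin : QMinimal q x) (hlt : mlt y x) (hqx : q x = eps R * q y) {i : ι}
    (hy : (bV.repr y).support = {i}) (hx : (bV.repr x).support = {i}) : x = eps R • y := by
  have hy' : y = bV.repr y i • bV i := by
    conv_lhs => rw [← restrict_support bV y, hy, restrict_singleton, coordTerm]
  have hx' : x = bV.repr x i • bV i := by
    conv_lhs => rw [← restrict_support bV x, hx, restrict_singleton, coordTerm]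
  have hyi : bV.repr y i ≠ bV.repr x i := fun h => hlt.2 (by rw [hy', hx', h])
  refine (hxmin.eq_of_mle hR ?_ ?_).symm
  · rw [hy', smul_smul, hx']
    exact mle_smul_right (eps_mul_mle_of_mlt hR ⟨mle_repr bV hlt.1 i, hyi⟩) _
  · rw [hqb.1, pow_two, mul_assoc, ← hqx]
    exact mle_eps_mul (q x)

lemma eps_smul_eq_of_support_pair (hR : IsSupertropical R)
    (hcanc : ∀ g ∈ ghost R, ∀ a ∈ ghost R, ∀ c ∈ ghost R, g * a = g * c → a = c)
    (hqb : IsQuadPair q bb) {x y : V} (hlt : mlt y x) (hqx : q x = eps R * q y)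
    (hqx0 : q x ≠ 0) {i j : ι} (hij : i ≠ j) (hy : (bV.repr y).support = {i, j})
    (hx : (bV.repr x).support = {i, j}) (hqy : q y = quadTerm q bb (coordTerm bV y) i j) :
    eps R • x = eps R • y := by
  have hy' : y = coordTerm bV y i + coordTerm bV y j := by
    conv_lhs => rw [← restrict_support bV y, hy, restrict_pair bV _ hij]
  have hx' : x = coordTerm bV x i + coordTerm bV x j := by
    conv_lhs => rw [← restrict_support bV x, hx, restrict_pair bV _ hij]
  obtain ⟨k, hk, hyk⟩ : ∃ k ∈ ({i, j} : Finset ι), bV.repr y k ≠ bV.repr x k := by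
    refine exists_mem_repr_ne_of_restrict_ne bV fun h => hlt.2 ?_
    rwa [restrict_pair bV _ hij, restrict_pair bV _ hij, ← hy', ← hx'] at h
  have hterm : quadTerm q bb (coordTerm bV x) i j = eps R * q y := by
    refine mle_antisymm hR ?_ (hqy ▸ eps_mul_quadTerm_mle bV hR hqb hlt.1 hk hyk)
    have h := quadTerm_mle_q_sum_pair hqb (coordTerm bV x) i j
    rwa [← restrict_eq_sum_coordTerm, ← hx, restrict_support, hqx] at h
  rw [hqy, quadTerm_coordTerm bV hqb, quadTerm_coordTerm bV hqb] at hterm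
  have h0 : bV.repr x i * bV.repr x j * quadTerm q bb bV i j ≠ 0 := by
    rwa [hterm, ← quadTerm_coordTerm bV hqb, ← hqy, ← hqx]
  have hi := eps_mul_eq_of_mul_mul_eq hR hcanc (mle_repr bV hlt.1 i) (mle_repr bV hlt.1 j)
    hterm h0
  have hj := eps_mul_eq_of_mul_mul_eq hR hcanc (mle_repr bV hlt.1 j) (mle_repr bV hlt.1 i)
    (by rw [mul_comm (bV.repr x j), mul_comm (bV.repr y j), hterm])
    (by rwa [mul_comm (bV.repr x j)])
  rw [hx', hy']
  simp only [coordTerm, smul_add, smul_smul, hi, hj]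

lemma ne_eps_smul_of_support_pair (hR : IsSupertropical R) (hqb : IsQuadPair q bb) {x y : V}
    (hxmin : QMinimal q x) (hyx : mle y x) (hqx : q x = eps R * q y) (hty : q y ∉ eSet R)
    {i j : ι} (hij : i ≠ j) (hx : (bV.repr x).support = {i, j})
    (hqy : q y = quadTerm q bb (coordTerm bV y) i j) : x ≠ eps R • y := by
  intro hxy
  have hxj : bV.repr x j = eps R * bV.repr y j := by
    rw [hxy, map_smul, Finsupp.smul_apply, smul_eq_mul]
  have hx' : x = coordTerm bV x i + coordTerm bV x j := by
    conv_lhs => rw [← restrict_support bV x, hx, restrict_pair bV _ hij]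
  have hu : coordTerm bV y i + coordTerm bV x j = x := by
    refine hxmin.eq_of_mle hR ?_ ?_
    · conv_rhs => rw [hx']
      exact mle_add (mle_smul_right (mle_repr bV hyx i) _) (mle_refl _)
    · refine mle_trans ?_ (hqb.companion_mle _ _)
      rw [hqx, hqy, quadTerm_coordTerm bV hqb, quadTerm, if_neg hij, coordTerm, coordTerm,
        hqb.2.2.2.1, hqb.companion_smul_right, hxj]
      convert mle_refl _ using 1
      ring
  have hyi : bV.repr y i = eps R * bV.repr y i := by
    have h := congrArg (fun v => bV.repr v i) hu
    simp [coordTerm, Ne.symm hij, hxy] at h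
    exact h
  refine hty ⟨bV.repr y i * bV.repr y j * quadTerm q bb bV i j, ?_⟩
  rw [hqy, quadTerm_coordTerm bV hqb]
  calc _ = eps R * bV.repr y i * bV.repr y j * quadTerm q bb bV i j := by ring
    _ = _ := by rw [← hyi]

end MinimalPairs

theorem stmt19_general {R : Type*} [CommSemiring R] (hR : IsSupertropical R)
    (hcanc : ∀ g ∈ ghost R, ∀ a ∈ ghost R, ∀ c ∈ ghost R, g * a = g * c → a = c)
    {V : Type*} [AddCommMonoid V] [Module R V] {ι : Type*} (bV : Module.Basis ι R V)
    (q : V → R) (hq : IsQuadForm q)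
    (x y : V) (hxmin : QMinimal q x) (hymin : QMinimal q y)
    (hlt : mlt y x) (hqq : eps R * q y = eps R * q x) :
    q y ∈ tangible R ∧ q x ∈ ghost R ∧
    (((bV.repr y).support.card = 1 ∧ (bV.repr x).support.card = 1 ∧
        x = eps R • y) ∨
     ((bV.repr y).support.card = 2 ∧ (bV.repr x).support.card = 2 ∧
        mlt y x ∧ mlt x (eps R • y)) ∨
     ((bV.repr y).support.card = 1 ∧ 2 ≤ (bV.repr x).support.card ∧
        y = restrict bV x (bV.repr y).support) ∨
     ((bV.repr y).support.card = 2 ∧ 3 ≤ (bV.repr x).support.card ∧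
        y = restrict bV x (bV.repr y).support)) := by
  obtain ⟨bb, hqb⟩ := hq
  obtain ⟨hqy, hqx, hqxy⟩ := tangible_ghost_of_mlt_of_eps_mul_eq hR (hxmin y hlt) hqq
  refine ⟨hqy, hqx, ?_⟩
  obtain ⟨i, j, hJ, hqyij⟩ := hymin.exists_support_eq_pair bV hR hqb hqy
  by_cases hyr : y = restrict bV x (bV.repr y).support
  · have hcard := card_support_lt_of_eq_restrict bV hlt (support_subset_of_mle bV hR hlt.1) hyr
    rcases eq_or_ne i j with rfl | hij
    · simp only [Finset.insert_eq_of_mem, Finset.mem_singleton] at hJ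
      rw [hJ, Finset.card_singleton] at hcard ⊢
      exact .inr (.inr (.inl ⟨rfl, hcard, hJ ▸ hyr⟩))
    · rw [hJ, Finset.card_pair hij] at hcard ⊢
      exact .inr (.inr (.inr ⟨rfl, hcard, hJ ▸ hyr⟩))
  · have hsupp := support_eq_of_ne_restrict bV hR hqb hxmin hlt.1 hqxy hJ hqyij hyr
    rw [hJ] at hsupp
    rcases eq_or_ne i j with rfl | hij
    · simp only [Finset.insert_eq_of_mem, Finset.mem_singleton] at hJ hsupp
      rw [hJ, hsupp, Finset.card_singleton]
      exact .inl ⟨rfl, rfl, eq_eps_smul_of_support_singleton bV hR hqb hxmin hlt hqxy hJ hsupp⟩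
    · rw [hJ, hsupp, Finset.card_pair hij]
      refine .inr (.inl ⟨rfl, rfl, hlt, ?_, ne_eps_smul_of_support_pair bV hR hqb hxmin hlt.1
        hqxy hqy hij hsupp hqyij⟩)
      rw [← eps_smul_eq_of_support_pair bV hR hcanc hqb hlt hqxy hqx.2 hij hJ hsupp hqyij]
      exact mle_eps_smul x

/-- structure of pairs of `q`-minimal vectors `y < x` with
`e·q(y) = e·q(x)`. -/
theorem stmt19 {R : Type*} [CommSemiring R] (hR : IsSupertropical R)
    (htan : TangibleSSF R) (hid : eps R ∈ ghost R)
    (hmul : ∀ g ∈ ghost R, ∀ h ∈ ghost R, g * h ∈ ghost R)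
    (hcanc : ∀ g ∈ ghost R, ∀ a ∈ ghost R, ∀ c ∈ ghost R, g * a = g * c → a = c)
    {V : Type*} [AddCommMonoid V] [Module R V] {ι : Type*} (bV : Module.Basis ι R V)
    (q : V → R) (hq : IsQuadForm q)
    (x y : V) (hxmin : QMinimal q x) (hymin : QMinimal q y)
    (hlt : mlt y x) (hqq : eps R * q y = eps R * q x) :
    q y ∈ tangible R ∧ q x ∈ ghost R ∧
    (((bV.repr y).support.card = 1 ∧ (bV.repr x).support.card = 1 ∧
        x = eps R • y) ∨
     ((bV.repr y).support.card = 2 ∧ (bV.repr x).support.card = 2 ∧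
        mlt y x ∧ mlt x (eps R • y)) ∨
     ((bV.repr y).support.card = 1 ∧ 2 ≤ (bV.repr x).support.card ∧
        y = restrict bV x (bV.repr y).support) ∨
     ((bV.repr y).support.card = 2 ∧ 3 ≤ (bV.repr x).support.card ∧
        y = restrict bV x (bV.repr y).support)) :=
  stmt19_general hR hcanc bV q hq x y hxmin hymin hlt hqq

end Supertrop
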